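/- arXiv:math/9809053 — 3 statements merged into one kernel-verified Lean document; each statement's English description precedes it below -/
import Mathlib

section
/- Let R be a left small ring, let E be a nonzero injective left R-module, and let λ be the cardinality of some generating set of E. Then every independent family of nonzero submodules of a finitely generated torsionfree left R-module M has cardinality strictly less than λ. In particular, if λ = ℵ₀, then every finitely generated torsionfree left R-module has finite Goldie (uniform) dimension, i.e. admits no infinite independent family of nonzero submodules. -/
universe u

/-- A left `R`-module `K` is a *small module* if there exist a left `R`-module `L` and an
injective `R`-linear map `f : K → L` whose image is a superfluous submodule of `L`. -/
def IsSmallModule (R : Type u) [Ring R] (K : Type u) [AddCommGroup K] [Module R K] : Prop :=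
  ∃ (L : Type u) (_ : AddCommGroup L) (_ : Module R L) (f : K →ₗ[R] L),
    Function.Injective f ∧
      ∀ X : Submodule R L, LinearMap.range f ⊔ X = ⊤ → X = ⊤

/-!
Suppose `M` had an independent family `(N i)_{i ∈ ι}` of nonzero submodules with `#s ≤ #ι`.
Nonzero elements `v i ∈ N i` are linearly independent since `M` is torsionfree, so `R^(ι)` embeds
into `M`; by injectivity of `E`, a map `R^(ι) → E` hitting every element of `s` extends to `M`,
which makes `E` a quotient of `M`, hence finitely generated, hence a quotient of some `R^k`.
Quotients and finite powers of small modules are small, so `E` would be small; but a nonzero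
injective module is a direct summand of every extension and therefore never small.
-/

namespace Submodule

variable {R : Type*} [Ring R] {L L' : Type*} [AddCommGroup L] [Module R L]
  [AddCommGroup L'] [Module R L']

def IsSuperfluous (N : Submodule R L) : Prop :=
  ∀ X : Submodule R L, N ⊔ X = ⊤ → X = ⊤

theorem isSuperfluous_bot : (⊥ : Submodule R L).IsSuperfluous := fun X hX => by
  simpa using hX

theorem IsSuperfluous.of_le {N N' : Submodule R L} (h : N'.IsSuperfluous) (hle : N ≤ N') :
    N.IsSuperfluous := fun X hX =>
  h X <| top_le_iff.mp <| hX ▸ sup_le_sup_right hle X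

theorem IsSuperfluous.sup {N N' : Submodule R L} (h : N.IsSuperfluous) (h' : N'.IsSuperfluous) :
    (N ⊔ N').IsSuperfluous := fun X hX =>
  h' X <| h _ <| by rwa [← sup_assoc]

theorem IsSuperfluous.iSup {ι : Type*} [Finite ι] {N : ι → Submodule R L}
    (h : ∀ i, (N i).IsSuperfluous) : (⨆ i, N i).IsSuperfluous := by
  cases nonempty_fintype ι
  rw [← Finset.sup_univ_eq_iSup]
  exact Finset.sup_induction isSuperfluous_bot (fun _ ha _ hb => ha.sup hb) fun i _ => h i

/-- If `f N + X = L'` then `N + f⁻¹ X = L`, so `f⁻¹ X = L` and `X ⊇ f L ⊇ f N`. -/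
theorem IsSuperfluous.map {N : Submodule R L} (h : N.IsSuperfluous) (f : L →ₗ[R] L') :
    (N.map f).IsSuperfluous := by
  intro X hX
  have hcomap : N ⊔ X.comap f = ⊤ := by
    refine eq_top_iff.mpr fun l _ => ?_
    obtain ⟨_, ⟨n, hn, rfl⟩, x, hx, hnx⟩ :=
      mem_sup.mp (hX.ge (mem_top : f l ∈ (⊤ : Submodule R L')))
    refine mem_sup.mpr ⟨n, hn, l - n, ?_, by abel⟩
    rw [mem_comap, map_sub, ← hnx, add_sub_cancel_left]
    exact hx
  have hNX : N.map f ≤ X := map_le_iff_le_comap.mpr (h _ hcomap ▸ le_top)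
  rwa [sup_eq_right.mpr hNX] at hX

end Submodule

namespace IsSmallModule

variable {R : Type u} [Ring R]

theorem of_surjective {K K' : Type u} [AddCommGroup K] [Module R K]
    [AddCommGroup K'] [Module R K'] (hK : IsSmallModule R K) (π : K →ₗ[R] K')
    (hπ : Function.Surjective π) : IsSmallModule R K' := by
  obtain ⟨L, _, _, f, hf, hsup⟩ := hK
  set W : Submodule R L := (LinearMap.ker π).map f
  have hker : LinearMap.ker π ≤ LinearMap.ker (W.mkQ ∘ₗ f) := fun k hk =>
    (Submodule.Quotient.mk_eq_zero W).mpr (Submodule.mem_map_of_mem hk)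
  let f' : K' →ₗ[R] L ⧸ W := (LinearMap.ker π).liftQ (W.mkQ ∘ₗ f) hker ∘ₗ
    ((π.quotKerEquivOfSurjective hπ).symm : K' →ₗ[R] K ⧸ LinearMap.ker π)
  have hf' : ∀ k, f' (π k) = W.mkQ (f k) := fun k => by
    have he : (π.quotKerEquivOfSurjective hπ).symm (π k) = Submodule.Quotient.mk k :=
      (LinearEquiv.symm_apply_eq _).mpr rfl
    simp only [f', LinearMap.comp_apply, LinearEquiv.coe_coe, he]
    rfl
  have hrange : LinearMap.range f' = (LinearMap.range f).map W.mkQ := by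
    rw [← LinearMap.range_comp,
      ← LinearMap.range_comp_of_range_eq_top _ (LinearMap.range_eq_top.mpr hπ)]
    exact congrArg LinearMap.range (LinearMap.ext hf')
  refine ⟨L ⧸ W, inferInstance, inferInstance, f', ?_, ?_⟩
  · refine (injective_iff_map_eq_zero f').mpr fun k' hk' => ?_
    obtain ⟨k, rfl⟩ := hπ k'
    rw [hf', Submodule.mkQ_apply, Submodule.Quotient.mk_eq_zero] at hk'
    obtain ⟨k₀, hk₀, hfk₀⟩ := hk'
    rwa [← hf hfk₀]
  · rw [hrange]
    exact Submodule.IsSuperfluous.map hsup W.mkQ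

theorem pi {ι : Type} [Finite ι] {K : ι → Type u} [∀ i, AddCommGroup (K i)]
    [∀ i, Module R (K i)] (hK : ∀ i, IsSmallModule R (K i)) :
    IsSmallModule R (∀ i, K i) := by
  classical
  choose L _ _ f hf hsup using hK
  refine ⟨∀ i, L i, inferInstance, inferInstance, LinearMap.piMap f, ?_, ?_⟩
  · rw [LinearMap.coe_piMap]
    exact Function.Injective.piMap hf
  · have hrange : LinearMap.range (LinearMap.piMap f) ≤
        ⨆ i, (LinearMap.range (f i)).map (LinearMap.single R L i) := by
      rw [Submodule.iSup_map_single]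
      rintro _ ⟨x, rfl⟩ i -
      exact ⟨x i, rfl⟩
    exact (Submodule.IsSuperfluous.iSup fun i => (Submodule.IsSuperfluous.map (hsup i) _)).of_le
      hrange

end IsSmallModule

/-- An embedding `f : E → L` splits, so `L = range f ⊕ ker h` for a retraction `h`. -/
theorem Module.Injective.not_isSmallModule {R : Type u} [Ring R] {E : Type u} [AddCommGroup E]
    [Module R E] [Nontrivial E] (hE : Module.Injective R E) : ¬IsSmallModule R E := by
  rintro ⟨L, _, _, f, hf, hsup⟩
  obtain ⟨h, hhf⟩ := hE.out f hf LinearMap.id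
  have hcompl : LinearMap.range f ⊔ LinearMap.ker h = ⊤ := by
    refine eq_top_iff.mpr fun l _ => Submodule.mem_sup.mpr
      ⟨f (h l), ⟨h l, rfl⟩, l - f (h l), ?_, by abel⟩
    rw [LinearMap.mem_ker, map_sub, hhf, LinearMap.id_apply, sub_self]
  obtain ⟨e, he⟩ := exists_ne (0 : E)
  have hfe : f e ∈ LinearMap.ker h := hsup _ hcompl ▸ Submodule.mem_top
  exact he (by simpa [hhf] using hfe)

theorem Module.Injective.not_finite_of_isSmallModule {R : Type u} [Ring R] {E : Type u}
    [AddCommGroup E] [Module R E] [Nontrivial E] (hE : Module.Injective R E)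
    (hR : IsSmallModule R R) : ¬Module.Finite R E := by
  intro _
  obtain ⟨k, F, hF⟩ := Module.Finite.exists_fin' R E
  exact hE.not_isSmallModule ((IsSmallModule.pi fun _ => hR).of_surjective F hF)

theorem Module.Injective.exists_surjective_of_linearIndependent {R : Type u} [Ring R]
    {E M ι : Type u} [AddCommGroup E] [Module R E] [AddCommGroup M] [Module R M]
    (hE : Module.Injective R E) {s : Set E} (hs : Submodule.span R s = ⊤) (g : s ↪ ι)
    {v : ι → M} (hv : LinearIndependent R v) :
    ∃ Φ : M →ₗ[R] E, Function.Surjective Φ := by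
  obtain ⟨Φ, hΦ⟩ := hE.out (Finsupp.linearCombination R v) hv
    (Finsupp.linearCombination R (Function.extend g Subtype.val 0))
  refine ⟨Φ, LinearMap.range_eq_top.mp <| eq_top_iff.mpr <| hs ▸ Submodule.span_le.mpr ?_⟩
  intro x hx
  refine ⟨Finsupp.linearCombination R v (Finsupp.single (g ⟨x, hx⟩) 1), ?_⟩
  rw [hΦ, Finsupp.linearCombination_single, one_smul, g.injective.extend_apply]

theorem iSupIndep.linearIndependent_of_mem {R M ι : Type*} [Ring R] [AddCommGroup M]
    [Module R M] [NoZeroSMulDivisors R M] {N : ι → Submodule R M} (hN : iSupIndep N)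
    {v : ι → M} (hvN : ∀ i, v i ∈ N i) (hv0 : ∀ i, v i ≠ 0) : LinearIndependent R v :=
  Ideal.iSupIndep.linearIndependent'
    (hN.mono fun i => (Submodule.span_singleton_le_iff_mem _ _).mpr (hvN i))
    fun i => by
      ext r
      rw [Ideal.mem_torsionOf_iff, Submodule.mem_bot]
      exact ⟨fun h => (eq_zero_or_eq_zero_of_smul_eq_zero h).resolve_right (hv0 i),
        fun h => h ▸ zero_smul R _⟩

theorem iSupIndep.mk_lt_mk_of_isSmallModule {R : Type u} [Ring R] (hR : IsSmallModule R R)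
    {E : Type u} [AddCommGroup E] [Module R E] [Nontrivial E] (hE : Module.Injective R E)
    {s : Set E} (hs : Submodule.span R s = ⊤) {M ι : Type u} [AddCommGroup M] [Module R M]
    [Module.Finite R M] [NoZeroSMulDivisors R M] {N : ι → Submodule R M} (hN : iSupIndep N)
    (hN0 : ∀ i, N i ≠ ⊥) : Cardinal.mk ι < Cardinal.mk s := by
  by_contra! hle
  obtain ⟨g⟩ := hle
  choose v hvN hv0 using fun i => (N i).ne_bot_iff.mp (hN0 i)
  obtain ⟨Φ, hΦ⟩ :=
    hE.exists_surjective_of_linearIndependent hs g (hN.linearIndependent_of_mem hvN hv0)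
  exact hE.not_finite_of_isSmallModule hR (Module.Finite.of_surjective Φ hΦ)

/-- Let `R` be a left small ring, `E` a nonzero injective left `R`-module and `λ = #s` the
cardinality of a generating set `s` of `E`.  Then every independent family of nonzero submodules
of a finitely generated torsionfree left `R`-module `M` has cardinality `< λ`; in particular, if
`λ = ℵ₀` then every finitely generated torsionfree left `R`-module has no infinite independent
family of nonzero submodules. -/
theorem stmt_5 (R : Type u) [Ring R] (hR : IsSmallModule R R)
    (E : Type u) [AddCommGroup E] [Module R E] [Nontrivial E] (hE : Module.Injective R E)
    (s : Set E) (hs : Submodule.span R s = ⊤) :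
    (∀ (M : Type u) [AddCommGroup M] [Module R M], Module.Finite R M →
      (∀ (r : R) (m : M), r ≠ 0 → m ≠ 0 → r • m ≠ 0) →
      ∀ (ι : Type u) (N : ι → Submodule R M), iSupIndep N → (∀ i, N i ≠ ⊥) →
        Cardinal.mk ι < Cardinal.mk s) ∧
    (Cardinal.mk s = Cardinal.aleph0 →
      ∀ (M : Type u) [AddCommGroup M] [Module R M], Module.Finite R M →
      (∀ (r : R) (m : M), r ≠ 0 → m ≠ 0 → r • m ≠ 0) →
      ∀ (ι : Type u) (N : ι → Submodule R M), iSupIndep N → (∀ i, N i ≠ ⊥) →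
        Finite ι) := by
  have noZeroSMulDivisors : ∀ (M : Type u) [AddCommGroup M] [Module R M],
      (∀ (r : R) (m : M), r ≠ 0 → m ≠ 0 → r • m ≠ 0) → NoZeroSMulDivisors R M :=
    fun M _ _ htf => ⟨fun {r m} h => by by_contra! hrm; exact htf r m hrm.1 hrm.2 h⟩
  refine ⟨fun M _ _ _ htf ι N hN hN0 => ?_, fun hs0 M _ _ _ htf ι N hN hN0 => ?_⟩
  · have := noZeroSMulDivisors M htf
    exact hN.mk_lt_mk_of_isSmallModule hR hE hs hN0
  · have := noZeroSMulDivisors M htf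
    exact Cardinal.lt_aleph0_iff_finite.mp (hs0 ▸ hN.mk_lt_mk_of_isSmallModule hR hE hs hN0)
end

section
/- Let R be a local ring that is not a division ring. Then R is left and right almost small: R as a left R-module is τ_cG-torsion, i.e. for all left submodules U ⊊ V ⊆ R the quotient V/U contains a nonzero small submodule, and the analogous statement holds for R as a right R-module. -/
/-!
In a local ring `R` the nonunits form a left ideal `𝔪`, and in a cyclic module `L = R w` the
submodule `R b w` (`b ∈ 𝔪`) is superfluous: if `r b w + x = w` then `x = (1 - r b) w` generates
`L`. Now let `v ≠ 0` in some module. If `b v ≠ 0` for some `b ∈ 𝔪`, then `R b v` is superfluous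
in `R v`. Otherwise `R v ≅ R ⧸ 𝔪`, and for a nonzero nonunit `a` the map `r ↦ r a` identifies
`R ⧸ 𝔪` with `R a ⧸ 𝔪 a`, a superfluous submodule of `R ⧸ 𝔪 a`. Either way `Z*` of every nonzero
module over `R` is nonzero, so every module is `τ_cG`-torsion; and `Rᵐᵒᵖ` is again local.
-/

universe u

/-- `Z*(M)` is the sum of all submodules of `M` that are small modules. -/
def ZStar (R : Type u) [Ring R] (M : Type u) [AddCommGroup M] [Module R M] : Submodule R M :=
  sSup {N : Submodule R M | IsSmallModule R ↥N}

/-- A left `R`-module `M` is `τ_cG`-torsion if `Z*(V/U) ≠ 0` for all submodules `U ⊊ V ⊆ M`. -/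
def IsCGTorsion (R : Type u) [Ring R] (M : Type u) [AddCommGroup M] [Module R M] : Prop :=
  ∀ U V : Submodule R M, U < V → ZStar R (↥V ⧸ Submodule.comap V.subtype U) ≠ ⊥

open Ideal LinearMap

namespace IsLocalRing

variable {R : Type u} [Ring R] [IsLocalRing R]

-- `b * a` is idempotent, and the only idempotents of a local ring are `0` and `1`.
instance (priority := 100) toIsDedekindFiniteMonoid : IsDedekindFiniteMonoid R where
  mul_eq_one_symm {a b} hab := by
    have he : IsIdempotentElem (b * a) := by
      rw [IsIdempotentElem, mul_assoc, ← mul_assoc a, hab, one_mul]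
    rcases isUnit_or_isUnit_of_add_one (add_sub_cancel (b * a) 1) with hu | hu
    · exact (IsIdempotentElem.iff_eq_one_of_isUnit hu).1 he
    · have hba : b * a = 0 :=
        sub_eq_self.1 ((IsIdempotentElem.iff_eq_one_of_isUnit hu).1 he.one_sub)
      have h10 : (1 : R) = 0 :=
        calc (1 : R) = a * (b * a) * b := by rw [← mul_assoc, hab, one_mul, hab]
          _ = 0 := by rw [hba, mul_zero, zero_mul]
      exact absurd h10 one_ne_zero

theorem isUnit_one_sub_of_not_isUnit {a : R} (ha : ¬IsUnit a) : IsUnit (1 - a) :=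
  (isUnit_or_isUnit_of_add_one (add_sub_cancel a 1)).resolve_left ha

variable (R) in
def nonunitsSubmodule : Submodule R R where
  carrier := nonunits R
  zero_mem' := zero_mem_nonunits.2 zero_ne_one
  add_mem' := nonunits_add
  smul_mem' _ _ ha := fun h => ha (isUnit_of_mul_isUnit_right h)

end IsLocalRing

instance {R : Type u} [Ring R] [IsLocalRing R] : IsLocalRing Rᵐᵒᵖ where
  isUnit_or_isUnit_of_add_one {a b} h := by
    simpa only [isUnit_unop] using
      IsLocalRing.isUnit_or_isUnit_of_add_one (congrArg MulOpposite.unop h)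

def Submodule.IsSuperfluous_s6 {R L : Type*} [Ring R] [AddCommGroup L] [Module R L]
    (N : Submodule R L) : Prop :=
  ∀ X : Submodule R L, N ⊔ X = ⊤ → X = ⊤

namespace Ideal

variable {R : Type u} [Ring R] {M : Type u} [AddCommGroup M] [Module R M]

theorem torsionOf_smul (b : R) (v : M) :
    torsionOf R M (b • v) = Submodule.comap (toSpanSingleton R R b) (torsionOf R M v) := by
  ext r
  simp [mul_smul]

theorem torsionOf_smul_quotient_mk_one (I : Ideal R) (b : R) :
    torsionOf R (R ⧸ I) (b • Submodule.Quotient.mk 1) =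
      Submodule.comap (toSpanSingleton R R b) I := by
  ext r
  simp [← Submodule.Quotient.mk_smul, smul_eq_mul]

theorem torsionOf_le_nonunitsSubmodule [IsLocalRing R] {v : M} (hv : v ≠ 0) :
    torsionOf R M v ≤ IsLocalRing.nonunitsSubmodule R :=
  fun _ hr hu => hv (hu.smul_eq_zero.1 hr)

end Ideal

section SmallModules

variable {R : Type u} [Ring R] {M : Type u} [AddCommGroup M] [Module R M]

theorem Submodule.IsSuperfluous_s6.isSmallModule {N : Submodule R M} (hN : N.IsSuperfluous_s6) :
    IsSmallModule R N :=
  ⟨M, _, _, N.subtype, N.injective_subtype, by rwa [N.range_subtype]⟩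

theorem IsSmallModule.of_linearEquiv {K : Type u} [AddCommGroup K] [Module R K]
    (e : K ≃ₗ[R] M) (h : IsSmallModule R M) : IsSmallModule R K := by
  obtain ⟨L, _, _, f, hf, hsup⟩ := h
  refine ⟨L, _, _, f ∘ₗ e.toLinearMap, hf.comp e.injective, ?_⟩
  rwa [LinearMap.range_comp, LinearEquiv.range, Submodule.map_top]

theorem zStar_ne_bot_of_isSmallModule {N : Submodule R M} (hN : N ≠ ⊥) (h : IsSmallModule R N) :
    ZStar R M ≠ ⊥ :=
  fun hZ => hN (le_bot_iff.1 (hZ ▸ le_sSup h))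

variable [IsLocalRing R]

theorem Submodule.isSuperfluous_span_smul {w : M} (hw : R ∙ w = ⊤) {b : R} (hb : ¬IsUnit b) :
    (R ∙ b • w).IsSuperfluous_s6 := by
  intro X hX
  obtain ⟨y, hy, x, hx, hyx⟩ := Submodule.mem_sup.1 (hX ▸ Submodule.mem_top : w ∈ _)
  obtain ⟨r, rfl⟩ := Submodule.mem_span_singleton.1 hy
  have hrb : ¬IsUnit (r * b) := fun h => hb (isUnit_of_mul_isUnit_right h)
  have hx' : x = (1 - r * b) • w := by
    rw [sub_smul, one_smul, mul_smul]
    exact eq_sub_of_add_eq' hyx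
  have hwX : w ∈ X := by
    rwa [hx', Submodule.smul_mem_iff_of_isUnit _
      (IsLocalRing.isUnit_one_sub_of_not_isUnit hrb)] at hx
  rw [eq_top_iff, ← hw, Submodule.span_singleton_le_iff_mem]
  exact hwX

theorem isSmallModule_span_of_torsionOf_eq_comap {v : M} {I : Ideal R} {b : R} (hb : ¬IsUnit b)
    (h : torsionOf R M v = Submodule.comap (toSpanSingleton R R b) I) :
    IsSmallModule R (R ∙ v) := by
  rw [← torsionOf_smul_quotient_mk_one] at h
  have hgen : R ∙ (Submodule.Quotient.mk 1 : R ⧸ I) = ⊤ := by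
    refine eq_top_iff.2 fun z _ => ?_
    obtain ⟨r, rfl⟩ := Submodule.Quotient.mk_surjective I z
    exact Submodule.mem_span_singleton.2
      ⟨r, by rw [← Submodule.Quotient.mk_smul, smul_eq_mul, mul_one]⟩
  exact ((Submodule.isSuperfluous_span_smul hgen hb).isSmallModule).of_linearEquiv
    ((quotTorsionOfEquivSpanSingleton R M v).symm ≪≫ₗ Submodule.quotEquivOfEq _ _ h ≪≫ₗ
      quotTorsionOfEquivSpanSingleton R _ _)

theorem isSmallModule_span_smul {b : R} (hb : ¬IsUnit b) (v : M) : IsSmallModule R (R ∙ b • v) :=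
  isSmallModule_span_of_torsionOf_eq_comap hb (torsionOf_smul b v)

theorem isSmallModule_span_of_torsionOf_eq_nonunits {a : R} (ha0 : a ≠ 0) (ha : ¬IsUnit a)
    {v : M} (hv : torsionOf R M v = IsLocalRing.nonunitsSubmodule R) : IsSmallModule R (R ∙ v) := by
  refine isSmallModule_span_of_torsionOf_eq_comap ha
    (I := (IsLocalRing.nonunitsSubmodule R).map (toSpanSingleton R R a)) ?_
  rw [Submodule.comap_map_eq, sup_eq_left.2 (torsionOf_le_nonunitsSubmodule ha0), hv]

theorem zStar_ne_bot [Nontrivial M] {a : R} (ha0 : a ≠ 0) (ha : ¬IsUnit a) : ZStar R M ≠ ⊥ := by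
  obtain ⟨v, hv⟩ := exists_ne (0 : M)
  by_cases hm : ∀ b : R, ¬IsUnit b → b • v = 0
  · have hv' : torsionOf R M v = IsLocalRing.nonunitsSubmodule R :=
      le_antisymm (torsionOf_le_nonunitsSubmodule hv) hm
    exact zStar_ne_bot_of_isSmallModule (by simpa using hv)
      (isSmallModule_span_of_torsionOf_eq_nonunits ha0 ha hv')
  · push Not at hm
    obtain ⟨b, hb, hbv⟩ := hm
    exact zStar_ne_bot_of_isSmallModule (by simpa using hbv) (isSmallModule_span_smul hb v)

variable (M) in
theorem isCGTorsion {a : R} (ha0 : a ≠ 0) (ha : ¬IsUnit a) : IsCGTorsion R M :=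
  fun U V hUV =>
    have : Nontrivial (V ⧸ U.comap V.subtype) :=
      Submodule.Quotient.nontrivial_iff.2 fun h => hUV.not_ge (Submodule.comap_subtype_eq_top.1 h)
    zStar_ne_bot ha0 ha

end SmallModules

/-- A local ring that is not a division ring is left and right almost small. -/
theorem stmt_6 (R : Type u) [Ring R] [IsLocalRing R]
    (h : ¬ ∀ a : R, a ≠ 0 → IsUnit a) :
    IsCGTorsion R R ∧ IsCGTorsion Rᵐᵒᵖ Rᵐᵒᵖ := by
  push Not at h
  obtain ⟨a, ha0, ha⟩ := h
  exact ⟨isCGTorsion R ha0 ha,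
    isCGTorsion Rᵐᵒᵖ ((MulOpposite.op_ne_zero_iff a).2 ha0) (isUnit_op.not.2 ha)⟩
end

section
/- Let R be a semilocal left Kasch ring. Then the dual Goldie torsion theory splits over R: every left R-module M has submodules T and F with M = T ⊕ F, where T is τ_cG-torsion and F is τ_cG-torsionfree. -/
universe u

/-!
Let `T ⊆ M` be the intersection of the kernels of all maps from `M` to simple modules that are
not small. A non-small simple submodule is a direct summand of any module containing it, so
non-small simple modules are injective and, over a left Kasch ring, also projective (they split
off `R`). The Jacobson radical annihilates simple modules, hence `M/T`; so `M/T` is semisimple,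
and all its simple submodules are non-small. Thus `M/T` is projective, `T` has a complement
`F ≅ M/T`, and `F` has no nonzero small submodule.

Conversely `J·x` is always a small submodule, so a module `W` with `Z*(W) = 0` is annihilated by
`J` and is semisimple. If `U < V ≤ T` had `Z*(V/U) = 0`, then `V/U` would have a non-small simple
submodule `S`, and the projection `V → S` would extend to `M` by injectivity of `S`, although every
map `M → S` vanishes on `T ⊇ V`.
-/

variable {R : Type u} [Ring R]

lemma IsSmallModule.of_injective {K K' : Type u} [AddCommGroup K] [Module R K]
    [AddCommGroup K'] [Module R K'] (h : IsSmallModule R K) (g : K' →ₗ[R] K)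
    (hg : Function.Injective g) : IsSmallModule R K' := by
  obtain ⟨L, _, _, f, hf, hsmall⟩ := h
  refine ⟨L, _, _, f ∘ₗ g, hf.comp hg, fun X hX => hsmall X (top_unique (hX ▸ ?_))⟩
  exact sup_le_sup_right (LinearMap.range_comp_le_range g f) X

lemma isSmallModule_of_forall_sup_eq_top {L : Type u} [AddCommGroup L] [Module R L]
    {N : Submodule R L} (h : ∀ X : Submodule R L, N ⊔ X = ⊤ → X = ⊤) : IsSmallModule R N :=
  ⟨L, _, _, N.subtype, N.injective_subtype, by simpa only [Submodule.range_subtype] using h⟩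

lemma IsAtom.exists_isCompl_of_not_isSmallModule {L : Type u} [AddCommGroup L] [Module R L]
    {A : Submodule R L} (hA : IsAtom A) (hns : ¬IsSmallModule R A) :
    ∃ X : Submodule R L, IsCompl A X := by
  obtain ⟨X, hAX, hX⟩ : ∃ X : Submodule R L, A ⊔ X = ⊤ ∧ X ≠ ⊤ := by
    by_contra! h
    exact hns (isSmallModule_of_forall_sup_eq_top h)
  refine ⟨X, disjoint_iff.2 ?_, codisjoint_iff.2 hAX⟩
  refine (hA.le_iff.1 inf_le_left).resolve_right fun h => hX ?_
  rwa [← hAX, eq_comm, sup_eq_right, ← inf_eq_left]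

lemma exists_leftInverse_of_not_isSmallModule {S : Type u} [AddCommGroup S] [Module R S]
    [IsSimpleModule R S] (hns : ¬IsSmallModule R S) {P : Type u} [AddCommGroup P] [Module R P]
    (ι : S →ₗ[R] P) (hι : Function.Injective ι) : ∃ r : P →ₗ[R] S, r ∘ₗ ι = LinearMap.id := by
  let e := LinearEquiv.ofInjective ι hι
  have hA : IsAtom (LinearMap.range ι) := isSimpleModule_iff_isAtom.1 (.congr e.symm)
  obtain ⟨X, hX⟩ := hA.exists_isCompl_of_not_isSmallModule fun h =>
    hns (h.of_injective e e.injective)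
  refine ⟨e.symm ∘ₗ Submodule.projectionOnto _ X hX, LinearMap.ext fun s => ?_⟩
  have : ι s = (e s : P) := rfl
  simp [this, Submodule.projectionOnto_apply_left]

theorem Module.injective_of_forall_exists_leftInverse {Q : Type u} [AddCommGroup Q] [Module R Q]
    (h : ∀ (P : Type u) [AddCommGroup P] [Module R P] (ι : Q →ₗ[R] P),
      Function.Injective ι → ∃ r : P →ₗ[R] Q, r ∘ₗ ι = LinearMap.id) :
    Module.Injective R Q := by
  refine ⟨fun X Y _ _ _ _ f hf g => ?_⟩
  -- embed `Q` into the pushout of `f` and `g`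
  let W := LinearMap.range (f.prod (-g))
  let ι : Q →ₗ[R] (Y × Q) ⧸ W := W.mkQ ∘ₗ LinearMap.inr R Y Q
  have hι : Function.Injective ι := by
    rw [← LinearMap.ker_eq_bot, eq_bot_iff]
    rintro q hq
    obtain ⟨x, hx⟩ : ((0 : Y), q) ∈ W := (Submodule.Quotient.mk_eq_zero W).1 hq
    simp only [LinearMap.prod_apply, Function.prod, Prod.mk.injEq] at hx
    obtain rfl : x = 0 := hf (by simpa using hx.1)
    simpa using hx.2.symm
  obtain ⟨r, hr⟩ := h _ ι hι
  refine ⟨r ∘ₗ W.mkQ ∘ₗ LinearMap.inl R Y Q, fun x => ?_⟩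
  have hx : W.mkQ (f x, 0) = ι (g x) := (Submodule.Quotient.eq W).2 ⟨x, by simp⟩
  simpa [hx] using LinearMap.congr_fun hr (g x)

theorem IsSimpleModule.injective_of_not_isSmallModule {S : Type u} [AddCommGroup S] [Module R S]
    [IsSimpleModule R S] (hns : ¬IsSmallModule R S) : Module.Injective R S :=
  Module.injective_of_forall_exists_leftInverse fun _ _ _ ι hι =>
    exists_leftInverse_of_not_isSmallModule hns ι hι

theorem IsSimpleModule.projective_of_not_isSmallModule {S : Type u} [AddCommGroup S] [Module R S]
    [IsSimpleModule R S] (hns : ¬IsSmallModule R S) {f : S →ₗ[R] R} (hf : Function.Injective f) :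
    Module.Projective R S :=
  let ⟨r, hr⟩ := exists_leftInverse_of_not_isSmallModule hns f hf
  Module.Projective.of_split f r hr

section Jacobson

variable {M : Type u} [AddCommGroup M] [Module R M]

lemma isSmallModule_map_jacobson_toSpanSingleton (x : M) :
    IsSmallModule R (Submodule.map (LinearMap.toSpanSingleton R M x) (Ring.jacobson R)) := by
  refine isSmallModule_of_forall_sup_eq_top fun X hX => ?_
  have hx : x ∈ X := by
    obtain ⟨_, ⟨j, hj, rfl⟩, y, hy, hjy⟩ := Submodule.mem_sup.1 (hX ▸ Submodule.mem_top : x ∈ _)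
    -- `(1 - j) • x = y ∈ X`, and `1 - j` has a left inverse as `j` lies in the Jacobson radical
    have hj' : -j ∈ Ideal.jacobson (⊥ : Ideal R) := by rw [Ideal.jacobson_bot]; exact neg_mem hj
    obtain ⟨v, hv⟩ := Ideal.mem_jacobson_iff.1 hj' 1
    have hv : v * (1 - j) = 1 := by
      rw [Ideal.mem_bot, sub_eq_zero, mul_one, mul_neg, neg_add_eq_sub] at hv
      rw [mul_sub, mul_one, hv]
    rw [LinearMap.toSpanSingleton_apply] at hjy
    have hy' : (1 - j) • x = y := by rw [sub_smul, one_smul, sub_eq_of_eq_add' hjy.symm]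
    rw [← one_smul R x, ← hv, mul_smul, hy']
    exact X.smul_mem v hy
  rw [← hX]
  refine (sup_eq_right.2 ?_).symm
  rintro _ ⟨j, -, rfl⟩
  exact X.smul_mem j hx

lemma jacobson_le_annihilator_of_zStar_eq_bot (h : ZStar R M = ⊥) :
    Ring.jacobson R ≤ Module.annihilator R M := fun j hj =>
  Module.mem_annihilator.2 fun x => by
    have hle : _ ≤ ZStar R M := le_sSup (isSmallModule_map_jacobson_toSpanSingleton x)
    rw [h] at hle
    exact (Submodule.mem_bot R).1 (hle ⟨j, hj, rfl⟩)

lemma isSemisimpleModule_of_jacobson_le_annihilator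
    [IsSemisimpleModule R (R ⧸ Ring.jacobson R)]
    (h : Ring.jacobson R ≤ Module.annihilator R M) : IsSemisimpleModule R M := by
  refine isSemisimpleModule_of_isSemisimpleModule_submodule'
    (p := fun x : M => Submodule.span R {x}) (fun x => ?_) ?_
  · have hker : Ring.jacobson R ≤ LinearMap.ker (LinearMap.toSpanSingleton R M x) :=
      fun j hj => Module.mem_annihilator.1 (h hj) x
    rw [LinearMap.span_singleton_eq_range, ← Submodule.range_liftQ _ _ hker]
    exact IsSemisimpleModule.range _
  · exact eq_top_iff.2 fun x _ => Submodule.mem_iSup_of_mem x (Submodule.mem_span_singleton_self x)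

end Jacobson

section ZStar

variable {M : Type u} [AddCommGroup M] [Module R M]

lemma zStar_eq_bot_of_injective {N : Type u} [AddCommGroup N] [Module R N] (f : N →ₗ[R] M)
    (hf : Function.Injective f) (h : ZStar R M = ⊥) : ZStar R N = ⊥ := by
  refine sSup_eq_bot.2 fun A hA => ?_
  let e := Submodule.equivMapOfInjective f hf A
  have hle : A.map f ≤ ZStar R M := le_sSup (hA.of_injective e.symm e.symm.injective)
  rw [h, le_bot_iff, ← Submodule.map_bot f] at hle
  exact Submodule.map_injective_of_injective hf hle

lemma zStar_eq_bot_of_forall_isAtom_not_isSmallModule [IsAtomic (Submodule R M)]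
    (h : ∀ A : Submodule R M, IsAtom A → ¬IsSmallModule R A) : ZStar R M = ⊥ := by
  refine sSup_eq_bot.2 fun N hN => ?_
  obtain hN' | ⟨A, hA, hAN⟩ := eq_bot_or_exists_atom_le N
  · exact hN'
  · exact (h A hA (hN.of_injective _ (Submodule.inclusion_injective hAN))).elim

lemma exists_isAtom_not_isSmallModule_of_zStar_eq_bot
    [IsSemisimpleModule R (R ⧸ Ring.jacobson R)] [Nontrivial M] (h : ZStar R M = ⊥) :
    ∃ A : Submodule R M, IsAtom A ∧ ¬IsSmallModule R A := by
  have := isSemisimpleModule_of_jacobson_le_annihilator (jacobson_le_annihilator_of_zStar_eq_bot h)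
  obtain ⟨A, hA⟩ := IsAtomic.exists_atom (Submodule R M)
  exact ⟨A, hA, fun hs => hA.1 (le_bot_iff.1 (h ▸ le_sSup hs))⟩

end ZStar

theorem Module.projective_of_isSemisimpleModule {M : Type u} [AddCommGroup M] [Module R M]
    [IsSemisimpleModule R M] (h : ∀ A : Submodule R M, IsAtom A → Module.Projective R A) :
    Module.Projective R M := by
  obtain ⟨s, e, -, hs⟩ := IsSemisimpleModule.exists_linearEquiv_dfinsupp R M
  have (m : s) : Module.Projective R m.1 := h m.1 (isSimpleModule_iff_isAtom.1 (hs m))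
  exact .of_equiv' e.symm

theorem Submodule.exists_isCompl_of_projective_quotient {M : Type u} [AddCommGroup M]
    [Module R M] (K : Submodule R M) [Module.Projective R (M ⧸ K)] : ∃ F, IsCompl K F := by
  obtain ⟨s, hs⟩ := Module.projective_lifting_property K.mkQ LinearMap.id K.mkQ_surjective
  have hmks (q : M ⧸ K) : K.mkQ (s q) = q := LinearMap.congr_fun hs q
  refine ⟨LinearMap.range s, disjoint_iff.2 (eq_bot_iff.2 ?_),
    codisjoint_iff.2 (eq_top_iff.2 fun x _ => ?_)⟩
  · rintro _ ⟨hK, q, rfl⟩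
    obtain rfl : q = 0 := by rw [← hmks q]; exact (Submodule.Quotient.mk_eq_zero K).2 hK
    simp
  · have hx : x - s (K.mkQ x) ∈ K := by
      rw [← Submodule.Quotient.mk_eq_zero, ← Submodule.mkQ_apply, map_sub, hmks, sub_self]
    simpa using Submodule.add_mem_sup hx (LinearMap.mem_range_self s (K.mkQ x))

/-- The reject in `M` of the simple modules that are not small, i.e. of the simple injective
modules. -/
def nonSmallSimpleReject (R : Type u) [Ring R] (M : Type u) [AddCommGroup M] [Module R M] :
    Submodule R M :=
  sInf {N | ∃ (S : Type u) (_ : AddCommGroup S) (_ : Module R S) (f : M →ₗ[R] S),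
    IsSimpleModule R S ∧ ¬IsSmallModule R S ∧ LinearMap.ker f = N}

section NonSmallSimpleReject

variable {M : Type u} [AddCommGroup M] [Module R M]

lemma mem_nonSmallSimpleReject {x : M} :
    x ∈ nonSmallSimpleReject R M ↔ ∀ (S : Type u) [AddCommGroup S] [Module R S],
      IsSimpleModule R S → ¬IsSmallModule R S → ∀ f : M →ₗ[R] S, f x = 0 := by
  refine Submodule.mem_sInf.trans ⟨fun h S _ _ hS hns f => h _ ⟨S, _, _, f, hS, hns, rfl⟩, ?_⟩
  rintro h _ ⟨S, _, _, f, hS, hns, rfl⟩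
  exact h S hS hns f

theorem isCGTorsion_nonSmallSimpleReject [IsSemisimpleModule R (R ⧸ Ring.jacobson R)] :
    IsCGTorsion R (nonSmallSimpleReject R M) := by
  intro U V hUV hZ
  obtain ⟨v, hvV, hvU⟩ := SetLike.exists_of_lt hUV
  have : Nontrivial (V ⧸ U.comap V.subtype) :=
    nontrivial_of_ne (Submodule.Quotient.mk ⟨v, hvV⟩) 0 (by simpa using hvU)
  obtain ⟨A, hA, hns⟩ := exists_isAtom_not_isSmallModule_of_zStar_eq_bot hZ
  have := isSimpleModule_iff_isAtom.2 hA
  have := IsSimpleModule.injective_of_not_isSmallModule hns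
  obtain ⟨r, hr⟩ := exists_leftInverse_of_not_isSmallModule hns A.subtype A.injective_subtype
  -- the surjection `V → A` extends to `M`, but every map from `M` to `A` kills the reject `⊇ V`
  obtain ⟨g, hg⟩ := Module.Injective.out ((nonSmallSimpleReject R M).subtype ∘ₗ V.subtype)
    ((nonSmallSimpleReject R M).injective_subtype.comp V.injective_subtype)
    (r ∘ₗ (U.comap V.subtype).mkQ)
  have := IsSimpleModule.nontrivial R A
  obtain ⟨a, ha⟩ := exists_ne (0 : A)
  obtain ⟨w, hw⟩ := (U.comap V.subtype).mkQ_surjective a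
  refine ha ?_
  calc a = r (A.subtype a) := (LinearMap.congr_fun hr a).symm
    _ = g ((V.subtype w : nonSmallSimpleReject R M) : M) := by
      rw [Submodule.subtype_apply, ← hw]; exact (hg w).symm
    _ = 0 := mem_nonSmallSimpleReject.1 (V.subtype w).2 A ‹_› hns g

lemma jacobson_le_annihilator_quotient_nonSmallSimpleReject :
    Ring.jacobson R ≤ Module.annihilator R (M ⧸ nonSmallSimpleReject R M) := fun j hj =>
  Module.mem_annihilator.2 fun q => by
    induction q using Submodule.Quotient.induction_on with | _ x => ?_
    rw [← Submodule.Quotient.mk_smul, Submodule.Quotient.mk_eq_zero, mem_nonSmallSimpleReject]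
    intro S _ _ _ _ f
    rw [map_smul]
    exact Module.mem_annihilator.1 (IsSemisimpleModule.jacobson_le_annihilator R S hj) (f x)

lemma not_isSmallModule_of_isAtom_quotient_nonSmallSimpleReject
    {A : Submodule R (M ⧸ nonSmallSimpleReject R M)} (hA : IsAtom A) : ¬IsSmallModule R A := by
  intro hsmall
  have := isSimpleModule_iff_isAtom.2 hA
  have := IsSimpleModule.nontrivial R A
  obtain ⟨⟨q, hqA⟩, hq⟩ := exists_ne (0 : A)
  obtain ⟨x, rfl⟩ := (nonSmallSimpleReject R M).mkQ_surjective q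
  have hx : x ∉ nonSmallSimpleReject R M := by simpa using hq
  simp only [mem_nonSmallSimpleReject, not_forall] at hx
  obtain ⟨S, _, _, hS, hns, f, hfx⟩ := hx
  let g : A →ₗ[R] S := (nonSmallSimpleReject R M).liftQ f
    (fun y hy => mem_nonSmallSimpleReject.1 hy S hS hns f) ∘ₗ A.subtype
  have hg : g ≠ 0 := fun h => hfx (LinearMap.congr_fun h ⟨_, hqA⟩)
  let e := LinearEquiv.ofBijective g (LinearMap.bijective_of_ne_zero hg)
  exact hns (hsmall.of_injective e.symm e.symm.injective)

end NonSmallSimpleReject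

/-- Over a semilocal left Kasch ring (`R/J(R)` semisimple, every simple left `R`-module embeds
into `R`), the dual Goldie torsion theory splits: every left `R`-module is the direct sum of a
`τ_cG`-torsion submodule and a `τ_cG`-torsionfree submodule. -/
theorem stmt_13 (R : Type u) [Ring R]
    (hsemilocal : IsSemisimpleModule R (R ⧸ Ideal.jacobson (⊥ : Ideal R)))
    (hkasch : ∀ (M : Type u) [AddCommGroup M] [Module R M], IsSimpleModule R M →
      ∃ f : M →ₗ[R] R, Function.Injective f) :
    ∀ (M : Type u) [AddCommGroup M] [Module R M],
      ∃ T F : Submodule R M, IsCompl T F ∧ IsCGTorsion R ↥T ∧ ZStar R ↥F = ⊥ := by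
  intro M _ _
  rw [Ideal.jacobson_bot] at hsemilocal
  let T := nonSmallSimpleReject R M
  have := isSemisimpleModule_of_jacobson_le_annihilator
    (jacobson_le_annihilator_quotient_nonSmallSimpleReject (R := R) (M := M))
  have : Module.Projective R (M ⧸ T) := Module.projective_of_isSemisimpleModule fun A hA =>
    have := isSimpleModule_iff_isAtom.2 hA
    let ⟨_, hf⟩ := hkasch A this
    IsSimpleModule.projective_of_not_isSmallModule
      (not_isSmallModule_of_isAtom_quotient_nonSmallSimpleReject hA) hf
  obtain ⟨F, hTF⟩ := T.exists_isCompl_of_projective_quotient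
  refine ⟨T, F, hTF, isCGTorsion_nonSmallSimpleReject, ?_⟩
  exact zStar_eq_bot_of_injective (T.quotientEquivOfIsCompl F hTF).symm.toLinearMap
    (LinearEquiv.injective _) (zStar_eq_bot_of_forall_isAtom_not_isSmallModule fun _ =>
      not_isSmallModule_of_isAtom_quotient_nonSmallSimpleReject)
end
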